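/- arXiv:0911.2014 — 6 statements merged into one kernel-verified Lean document; each statement's English description precedes it below -/
import Mathlib

section
/- Let M be a finite matroid on ground set E and let ρ : E → V and ρ' : E → V' be two representations of M over the field F₂ = ZMod 2. Then there exists a unique F₂-linear isomorphism φ : V → V' such that ρ' = φ ∘ ρ. -/
/-- `ρ` is a representation of the matroid `M` over the field `K`: a subset of the ground
set is independent iff `ρ` is injective on it and its image is `K`-linearly independent,
and the image of the ground set spans `V`. -/
def Matroid.IsRep {α : Type*} (M : Matroid α) (K : Type*) [Field K] {V : Type*}
    [AddCommGroup V] [Module K V] (ρ : α → V) : Prop :=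
  (∀ S ⊆ M.E, (M.Indep S ↔ Set.InjOn ρ S ∧ LinearIndependent K ((↑) : (ρ '' S) → V))) ∧
    Submodule.span K (ρ '' M.E) = ⊤

/-!
A base `B` of `M` is mapped by any representation `ρ` to a basis of `V`, and the coordinate of
`ρ e` at `i ∈ B` vanishes exactly when `e` lies in the closure of `B \ {i}`. So the zero pattern
of the coordinates depends on `M` alone; over `𝔽₂` a scalar is determined by whether it is zero,
so two representations have the same coordinates in the bases coming from `B`, and the linear
isomorphism matching these bases carries one onto the other. It is unique because `ρ(E)` spans.
-/

open Set Submodule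

namespace Matroid.IsRep

variable {α K V : Type*} [Field K] [AddCommGroup V] [Module K V] {M : Matroid α} {ρ : α → V}

theorem indep_iff (h : M.IsRep K ρ) {I : Set α} (hI : I ⊆ M.E) :
    M.Indep I ↔ LinearIndepOn K ρ I := by
  rw [h.1 I hI]
  exact ⟨fun ⟨hinj, hli⟩ => (linearIndepOn_iff_image hinj).2 hli,
    fun hli => ⟨hli.injOn, (linearIndepOn_iff_image hli.injOn).1 hli⟩⟩

theorem mem_closure_iff (h : M.IsRep K ρ) {I : Set α} (hI : M.Indep I) {e : α}
    (he : e ∈ M.E) : e ∈ M.closure I ↔ ρ e ∈ span K (ρ '' I) := by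
  by_cases heI : e ∈ I
  · exact iff_of_true (M.subset_closure I hI.subset_ground heI)
      (subset_span (mem_image_of_mem ρ heI))
  have hIe : insert e I ⊆ M.E := insert_subset he hI.subset_ground
  rw [hI.mem_closure_iff_of_notMem heI, ← not_indep_iff hIe, h.indep_iff hIe,
    linearIndepOn_insert heI, and_iff_right ((h.indep_iff hI.subset_ground).1 hI), not_not]

theorem span_image_eq_top_of_isBase (h : M.IsRep K ρ) {B : Set α} (hB : M.IsBase B) :
    span K (ρ '' B) = ⊤ := by
  rw [eq_top_iff, ← h.2, span_le]
  rintro _ ⟨e, he, rfl⟩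
  exact (h.mem_closure_iff hB.indep he).1 (hB.closure_eq ▸ he)

noncomputable def basisOfIsBase (h : M.IsRep K ρ) {B : Set α} (hB : M.IsBase B) :
    Module.Basis B K V :=
  Module.Basis.mk ((h.indep_iff hB.subset_ground).1 hB.indep)
    (by rw [← image_eq_range, h.span_image_eq_top_of_isBase hB])

@[simp]
theorem coe_basisOfIsBase (h : M.IsRep K ρ) {B : Set α} (hB : M.IsBase B) :
    ⇑(h.basisOfIsBase hB) = fun i : B => ρ i :=
  Module.Basis.coe_mk _ _

theorem basisOfIsBase_repr_eq_zero_iff (h : M.IsRep K ρ) {B : Set α} (hB : M.IsBase B)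
    {e : α} (he : e ∈ M.E) (i : B) :
    (h.basisOfIsBase hB).repr (ρ e) i = 0 ↔ e ∈ M.closure (B \ {(i : α)}) := by
  have himage : h.basisOfIsBase hB '' {i}ᶜ = ρ '' (B \ {(i : α)}) := by
    rw [coe_basisOfIsBase, ← image_image, image_val_compl, image_singleton]
  rw [h.mem_closure_iff (hB.indep.subset sdiff_subset) he, ← himage,
    Module.Basis.mem_span_image, subset_compl_singleton_iff, Finset.mem_coe,
    Finsupp.mem_support_iff, not_not]

theorem basisOfIsBase_repr_eq_of_zmod_two {V' : Type*} [AddCommGroup V'] [Module (ZMod 2) V']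
    [Module (ZMod 2) V] {ρ' : α → V'} (h : M.IsRep (ZMod 2) ρ) (h' : M.IsRep (ZMod 2) ρ')
    {B : Set α} (hB : M.IsBase B) {e : α} (he : e ∈ M.E) :
    (h.basisOfIsBase hB).repr (ρ e) = (h'.basisOfIsBase hB).repr (ρ' e) := by
  have eq_of_eq_zero_iff : ∀ x y : ZMod 2, (x = 0 ↔ y = 0) → x = y := by decide
  ext i
  exact eq_of_eq_zero_iff _ _ <| by
    rw [h.basisOfIsBase_repr_eq_zero_iff hB he, h'.basisOfIsBase_repr_eq_zero_iff hB he]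

end Matroid.IsRep

theorem rigidity_of_binary_matroids_general {α V V' : Type*}
    [AddCommGroup V] [Module (ZMod 2) V] [AddCommGroup V'] [Module (ZMod 2) V']
    (M : Matroid α) (ρ : α → V) (ρ' : α → V')
    (h : M.IsRep (ZMod 2) ρ) (h' : M.IsRep (ZMod 2) ρ') :
    ∃! φ : V ≃ₗ[ZMod 2] V', ∀ e ∈ M.E, ρ' e = φ (ρ e) := by
  obtain ⟨B, hB⟩ := M.exists_isBase
  let b := h.basisOfIsBase hB
  let b' := h'.basisOfIsBase hB
  have hφ : ∀ e ∈ M.E, ρ' e = (b.repr ≪≫ₗ b'.repr.symm) (ρ e) := fun e he => by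
    rw [LinearEquiv.trans_apply, LinearEquiv.eq_symm_apply,
      h.basisOfIsBase_repr_eq_of_zmod_two h' hB he]
  refine ⟨b.repr ≪≫ₗ b'.repr.symm, hφ, fun ψ hψ => ?_⟩
  refine LinearEquiv.toLinearMap_injective (LinearMap.ext_on h.2 ?_)
  rintro _ ⟨e, he, rfl⟩
  exact (hψ e he).symm.trans (hφ e he)

/-- **Rigidity of binary matroids**: two representations of the same finite matroid over
`𝔽₂` differ by a unique linear isomorphism. -/
theorem rigidity_of_binary_matroids {α V V' : Type*}
    [AddCommGroup V] [Module (ZMod 2) V] [AddCommGroup V'] [Module (ZMod 2) V']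
    (M : Matroid α) [M.Finite] (ρ : α → V) (ρ' : α → V')
    (h : M.IsRep (ZMod 2) ρ) (h' : M.IsRep (ZMod 2) ρ') :
    ∃! φ : V ≃ₗ[ZMod 2] V', ∀ e ∈ M.E, ρ' e = φ (ρ e) :=
  rigidity_of_binary_matroids_general M ρ ρ' h h'
end

section
/- Let M be a finite matroid of rank r. Then M is binary (admits a representation over F₂) if and only if H₁(M;F₂) is an F₂-vector space of dimension exactly r. -/
open scoped Classical

/-- `M` is representable over the field `K`. -/
def Matroid.RepresentableOver {α : Type*} (M : Matroid α) (K : Type) [Field K] : Prop :=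
  ∃ (V : Type) (_ : AddCommGroup V) (_ : Module K V) (ρ : α → V), M.IsRep K ρ

/-- A matroid is binary if it admits a representation over `𝔽₂ = ZMod 2`. -/
def Matroid.IsBinary {α : Type*} (M : Matroid α) : Prop :=
  M.RepresentableOver (ZMod 2)

/-- A circuit of `M` is a minimal dependent set. -/
def Matroid.IsCircuit' {α : Type*} (M : Matroid α) (C : Set α) : Prop :=
  M.Dep C ∧ ∀ D, D ⊂ C → ¬ M.Dep D

/-- The subspace of the space of functions `M.E → 𝔽₂` spanned by the indicator
functions of the circuits of `M`. -/
def Matroid.circuitSubspace {α : Type*} (M : Matroid α) :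
    Submodule (ZMod 2) (↥M.E → ZMod 2) :=
  Submodule.span (ZMod 2)
    {f | ∃ C : Set α, M.IsCircuit' C ∧ f = fun e : ↥M.E => if (e : α) ∈ C then (1 : ZMod 2) else 0}

/-!
For a base `B`, each `e ∉ B` lies with elements of `B` in its fundamental circuit, so the classes
`[e]` of the elements of `B` span `H₁(M; 𝔽₂)` and `dim H₁ ≤ r` for every finite matroid.
An `𝔽₂`-representation `ρ` gives the boundary map `f ↦ ∑ f(e) ρ(e)`, which kills every circuit
(a circuit sums to zero over `𝔽₂`); it factors through `H₁` and sends the classes of `B` to the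
independent family `ρ(B)`, so `dim H₁ ≥ r`. Conversely, if `dim H₁ = r` the classes of every base
form a basis of `H₁`, so `e ↦ [e]` is itself a representation: independent sets extend to bases,
and a circuit `C` gives the relation `∑_{e ∈ C} [e] = 0`.
-/

namespace Matroid

variable {α : Type*} {M : Matroid α}

lemma isCircuit'_iff_isCircuit {C : Set α} : M.IsCircuit' C ↔ M.IsCircuit C := by
  rw [isCircuit_iff_forall_ssubset]
  refine and_congr_right fun hC => forall_congr' fun D => ?_
  refine imp_congr_right fun hDC => ?_
  rw [not_dep_iff (hDC.subset.trans hC.subset_ground)]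

section Representation

variable {K : Type*} [Field K] {V W : Type*} [AddCommGroup V] [Module K V] [AddCommGroup W]
  [Module K W] {ρ : α → V}

lemma isRep_iff : M.IsRep K ρ ↔
    (∀ S ⊆ M.E, M.Indep S ↔ LinearIndepOn K ρ S) ∧ Submodule.span K (ρ '' M.E) = ⊤ := by
  refine and_congr_left fun _ => forall₂_congr fun S _ => iff_congr Iff.rfl ?_
  exact ⟨fun h => (linearIndepOn_iff_image h.1).2 h.2,
    fun h => ⟨h.injOn, (linearIndepOn_iff_image h.injOn).1 h⟩⟩

lemma IsRep.comp_linearEquiv (hρ : M.IsRep K ρ) (e : V ≃ₗ[K] W) : M.IsRep K (e ∘ ρ) := by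
  rw [isRep_iff] at hρ ⊢
  refine ⟨fun S hS => ?_, ?_⟩
  · rw [hρ.1 S hS]
    exact ((e : V →ₗ[K] W).linearIndepOn_iff_of_injOn e.injective.injOn).symm
  · rw [Set.image_comp, Submodule.span_image_linearEquiv, hρ.2, Submodule.map_top]
    exact LinearEquiv.range e

end Representation

lemma IsRep.representableOver {K : Type} [Field K] {V : Type*} [AddCommGroup V] [Module K V]
    [Module.Finite K V] {ρ : α → V} (hρ : M.IsRep K ρ) : M.RepresentableOver K :=
  ⟨_, _, _, _, hρ.comp_linearEquiv (Module.finBasis K V).equivFun⟩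

lemma IsRep.sum_eq_zero_of_isCircuit {V : Type*} [AddCommGroup V] [Module (ZMod 2) V]
    {ρ : α → V} (hρ : M.IsRep (ZMod 2) ρ) {C : Finset α} (hC : M.IsCircuit C) :
    ∑ a ∈ C, ρ a = 0 := by
  -- The support of a nontrivial relation on `C` is dependent, hence all of `C`, and over `𝔽₂`
  -- every coefficient on the support is `1`.
  have hindep := (isRep_iff.1 hρ).1
  obtain ⟨f, hfC, hf0, hf⟩ := linearDepOn_iff.1 <| (hindep _ hC.subset_ground).not.1 hC.not_indep
  have hsupp : (f.support : Set α) = C := by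
    refine hC.eq_of_not_indep_subset (fun hI => hf ?_) hfC
    exact linearIndepOn_iff.1 ((hindep _ (hfC.trans hC.subset_ground)).1 hI) f
      (Finsupp.mem_supported_support _ _) hf0
  rw [Finset.coe_inj] at hsupp
  rw [← hsupp, ← hf0]
  refine Finset.sum_congr rfl fun a ha => ?_
  rw [show f a = 1 from Fin.eq_one_of_ne_zero _ (Finsupp.mem_support_iff.1 ha), one_smul]

instance [M.Finite] : Finite M.E := M.ground_finite.to_subtype

noncomputable def indicatorVec (M : Matroid α) (X : Set α) : M.E → ZMod 2 :=
  fun e => if (e : α) ∈ X then 1 else 0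

lemma sum_indicatorVec_singleton (t : Finset α) :
    ∑ a ∈ t, M.indicatorVec {a} = M.indicatorVec t := by
  funext e
  simp only [indicatorVec, Finset.sum_apply, Set.mem_singleton_iff, Finset.mem_coe,
    Finset.sum_ite_eq]

lemma indicatorVec_mem_circuitSubspace {C : Set α} (hC : M.IsCircuit C) :
    M.indicatorVec C ∈ M.circuitSubspace :=
  Submodule.subset_span ⟨C, isCircuit'_iff_isCircuit.2 hC, rfl⟩

abbrev H1 (M : Matroid α) : Type _ := (↥M.E → ZMod 2) ⧸ M.circuitSubspace

noncomputable def h1Class (M : Matroid α) (a : α) : M.H1 :=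
  M.circuitSubspace.mkQ (M.indicatorVec {a})

lemma sum_h1Class_eq_zero_of_isCircuit {C : Finset α} (hC : M.IsCircuit C) :
    ∑ a ∈ C, M.h1Class a = 0 := by
  rw [← (Submodule.Quotient.mk_eq_zero _).2 (indicatorVec_mem_circuitSubspace hC),
    ← sum_indicatorVec_singleton, ← Submodule.mkQ_apply, map_sum]
  rfl

lemma span_h1Class_ground [M.Finite] : Submodule.span (ZMod 2) (M.h1Class '' M.E) = ⊤ := by
  have := Fintype.ofFinite M.E
  refine eq_top_iff.2 fun x _ => ?_
  obtain ⟨f, rfl⟩ := Submodule.mkQ_surjective _ x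
  rw [pi_eq_sum_univ f, map_sum]
  refine Submodule.sum_mem _ fun e _ => ?_
  rw [map_smul]
  refine Submodule.smul_mem _ _ (Submodule.subset_span ⟨e, e.2, congrArg _ (funext fun j => ?_)⟩)
  simp [indicatorVec, Subtype.ext_iff, eq_comm]

lemma span_h1Class_isBase [M.Finite] {B : Set α} (hB : M.IsBase B) :
    Submodule.span (ZMod 2) (M.h1Class '' B) = ⊤ := by
  refine eq_top_iff.2 (span_h1Class_ground (M := M) ▸ Submodule.span_le.2 ?_)
  rintro _ ⟨a, ha, rfl⟩
  by_cases haB : a ∈ B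
  · exact Submodule.subset_span ⟨a, haB, rfl⟩
  have hC := hB.fundCircuit_isCircuit ha haB
  obtain ⟨t, ht⟩ := (M.set_finite _ hC.subset_ground).exists_finset_coe
  have hat : a ∈ t := by simpa [← ht] using M.mem_fundCircuit a B
  have hsum := sum_h1Class_eq_zero_of_isCircuit (ht ▸ hC)
  rw [← Finset.add_sum_erase _ _ hat, add_eq_zero_iff_eq_neg] at hsum
  rw [SetLike.mem_coe, hsum]
  refine Submodule.neg_mem _ (Submodule.sum_mem _ fun b hb => Submodule.subset_span ⟨b, ?_, rfl⟩)
  have hbC : b ∈ M.fundCircuit a B := ht ▸ Finset.mem_of_mem_erase hb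
  exact (Set.mem_insert_iff.1 (M.fundCircuit_subset_insert a B hbC)).resolve_left
    (Finset.ne_of_mem_erase hb)

lemma finrank_H1_le_ncard [M.Finite] {B : Set α} (hB : M.IsBase B) :
    Module.finrank (ZMod 2) M.H1 ≤ B.ncard := by
  have := (M.set_finite B hB.subset_ground).fintype
  calc Module.finrank (ZMod 2) M.H1
      = Module.finrank (ZMod 2) (Submodule.span (ZMod 2) (Set.range fun b : B => M.h1Class b)) := by
        rw [← Set.image_eq_range, span_h1Class_isBase hB, finrank_top]
    _ ≤ Fintype.card B := finrank_range_le_card _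
    _ = B.ncard := by rw [Set.ncard_eq_toFinset_card', Set.toFinset_card]

lemma IsRep.linearIndepOn_h1Class [M.Finite] {V : Type*} [AddCommGroup V] [Module (ZMod 2) V]
    {ρ : α → V} (hρ : M.IsRep (ZMod 2) ρ) {I : Set α} (hI : M.Indep I) :
    LinearIndepOn (ZMod 2) M.h1Class I := by
  have := Fintype.ofFinite M.E
  let Φ := Fintype.linearCombination (ZMod 2) fun e : M.E => ρ e
  have hΦ_single : ∀ a ∈ M.E, Φ (M.indicatorVec {a}) = ρ a := fun a ha => by
    simp only [Φ, Fintype.linearCombination_apply, indicatorVec, Set.mem_singleton_iff, ite_smul,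
      one_smul, zero_smul]
    rw [Fintype.sum_eq_single ⟨a, ha⟩ fun e he => if_neg fun h => he (Subtype.ext h), if_pos rfl]
  have hΦ : M.circuitSubspace ≤ LinearMap.ker Φ := by
    refine Submodule.span_le.2 ?_
    rintro _ ⟨C, hC, rfl⟩
    rw [isCircuit'_iff_isCircuit] at hC
    obtain ⟨t, rfl⟩ := (M.set_finite _ hC.subset_ground).exists_finset_coe
    change Φ (M.indicatorVec t) = 0
    rw [← sum_indicatorVec_singleton, map_sum,
      Finset.sum_congr rfl fun a ha => hΦ_single a (hC.subset_ground ha)]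
    exact hρ.sum_eq_zero_of_isCircuit hC
  have hΦρ : Set.EqOn (M.circuitSubspace.liftQ Φ hΦ ∘ M.h1Class) ρ I :=
    fun a ha => hΦ_single a (hI.subset_ground ha)
  exact ((isRep_iff.1 hρ).1 I hI.subset_ground |>.1 hI).congr hΦρ.symm |>.of_comp _

lemma IsRep.ncard_le_finrank_H1 [M.Finite] {V : Type*} [AddCommGroup V] [Module (ZMod 2) V]
    {ρ : α → V} (hρ : M.IsRep (ZMod 2) ρ) {I : Set α} (hI : M.Indep I) :
    I.ncard ≤ Module.finrank (ZMod 2) M.H1 := by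
  have := (M.set_finite I hI.subset_ground).fintype
  rw [Set.ncard_eq_toFinset_card', Set.toFinset_card]
  exact (hρ.linearIndepOn_h1Class hI).fintype_card_le_finrank

lemma linearIndepOn_h1Class_of_finrank_eq [M.Finite] {B : Set α} (hB : M.IsBase B)
    (h : Module.finrank (ZMod 2) M.H1 = B.ncard) : LinearIndepOn (ZMod 2) M.h1Class B := by
  have := (M.set_finite B hB.subset_ground).fintype
  refine linearIndependent_of_top_le_span_of_card_eq_finrank ?_ ?_
  · rw [← Set.image_eq_range, span_h1Class_isBase hB]
  · rw [h, Set.ncard_eq_toFinset_card', Set.toFinset_card]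

lemma isRep_h1Class_of_finrank_eq [M.Finite] {B : Set α} (hB : M.IsBase B)
    (h : Module.finrank (ZMod 2) M.H1 = B.ncard) : M.IsRep (ZMod 2) M.h1Class := by
  refine isRep_iff.2 ⟨fun S hS => ⟨fun hSi => ?_, fun hSli => ?_⟩, span_h1Class_ground⟩
  · obtain ⟨B', hB', hSB'⟩ := hSi.exists_isBase_superset
    exact (linearIndepOn_h1Class_of_finrank_eq hB'
      (h.trans (hB.ncard_eq_ncard_of_isBase hB'))).mono hSB'
  · by_contra hSi
    obtain ⟨C, hCS, hC⟩ := ((not_indep_iff hS).1 hSi).exists_isCircuit_subset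
    obtain ⟨t, rfl⟩ := (M.set_finite _ hC.subset_ground).exists_finset_coe
    obtain ⟨a, ha⟩ := hC.nonempty
    refine one_ne_zero (linearIndepOn_iff'.1 hSli t 1 hCS ?_ a ha)
    simpa using sum_h1Class_eq_zero_of_isCircuit hC

end Matroid

/-- A finite matroid of rank `r` is binary if and only if `H₁(M; 𝔽₂)`, the quotient of the
space of functions `M.E → 𝔽₂` by the span of the indicator functions of the circuits, has
dimension exactly `r` over `𝔽₂`. -/
theorem binary_iff_finrank_H1_eq_rank {α : Type*} (M : Matroid α) [M.Finite]
    (r : ℕ) (B : Set α) (hB : M.IsBase B) (hBr : B.ncard = r) :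
    M.IsBinary ↔
      Module.finrank (ZMod 2) ((↥M.E → ZMod 2) ⧸ M.circuitSubspace) = r := by
  subst hBr
  constructor
  · rintro ⟨V, _, _, ρ, hρ⟩
    exact (M.finrank_H1_le_ncard hB).antisymm (hρ.ncard_le_finrank_H1 hB.indep)
  · intro h
    exact (M.isRep_h1Class_of_finrank_eq hB h).representableOver
end

section
/- Let r ≥ 1 and let E₁, E₂ be elements of IR(r,F₂) such that E₁ ∩ E₂ is linearly independent over F₂. Set d = |E₁ \ E₂| + |E₂ \ E₁|. Then there exists a sequence γ₀, γ₁, …, γ_d of elements of IR(r,F₂) with γ₀ = E₁, γ_d = E₂, and such that for each i = 1, …, d the symmetric difference of γ_{i−1} and γ_i consists of exactly one element (a regular geodesic from E₁ to E₂ exists). -/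
open CategoryTheory

/-- A subset `E` of `𝔽₂^r` not containing `0` is *regular-spanning* if it spans `𝔽₂^r` and
the binary matroid of linear dependence on `E` is regular of rank `r`, expressed concretely
by the existence of `ρ : E → ℚ^r` realizing the same independent sets, under which every
`r`-element `𝔽₂`-basis contained in `E` is sent to a matrix of determinant `±1`. -/
def RegularSpanning (r : ℕ) (E : Set (Fin r → ZMod 2)) : Prop :=
  0 ∉ E ∧ Submodule.span (ZMod 2) E = ⊤ ∧
    ∃ ρ : (Fin r → ZMod 2) → (Fin r → ℚ),
      (∀ S ⊆ E,
        (LinearIndependent (ZMod 2) ((↑) : S → (Fin r → ZMod 2)) ↔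
          Set.InjOn ρ S ∧ LinearIndependent ℚ ((↑) : (ρ '' S) → (Fin r → ℚ)))) ∧
      ∀ g : Fin r → (Fin r → ZMod 2), (∀ i, g i ∈ E) →
        LinearIndependent (ZMod 2) g →
          (Matrix.of fun i j => ρ (g j) i).det = 1 ∨
          (Matrix.of fun i j => ρ (g j) i).det = -1

/-!
Walk from `E₁` to `E₂` one element at a time, keeping the current set `A` regular-spanning and
either `A ∩ E₂` independent or `A`, `E₂` nested. If `A ⊆ E₂`, add an element of `E₂`; if
`E₂ ⊆ A`, delete one of `A`: spanning subsets of a regular-spanning set are regular-spanning.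
Otherwise, a dependent `A` has an element outside a basis extending `A ∩ E₂` whose deletion keeps
`A` spanning, while for a basis `A` some `x ∈ E₂` lies outside the span of `A ∩ E₂`, and
`insert x A` is regular-spanning since a basis plus one vector always is.
-/

open Set Submodule

namespace Matrix

variable {m n n' R : Type*} [CommRing R]

theorem IsTotallyUnimodular.of_range_transpose_subset {A : Matrix m n R} {B : Matrix m n' R}
    (hA : A.IsTotallyUnimodular) (hBA : range Bᵀ ⊆ range Aᵀ) : B.IsTotallyUnimodular := by
  choose c hc using fun j => hBA (mem_range_self j)
  have hB : B = A.submatrix id c := by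
    ext i j
    exact (congrFun (hc j) i).symm
  exact hB ▸ hA.submatrix id c

theorem isTotallyUnimodular_replicateCol {v : m → R} (hv : ∀ i, v i ∈ range SignType.cast) :
    (replicateCol n v).IsTotallyUnimodular := by
  rw [isTotallyUnimodular_iff]
  intro k f g
  match k with
  | 0 => exact ⟨1, by simp⟩
  | 1 => simpa using hv (f 0)
  | k + 2 => exact ⟨0, (det_zero_of_column_eq (i := 0) (j := 1) (by simp) fun _ => rfl).symm⟩

end Matrix

theorem regularSpanning_of_isTotallyUnimodular {r : ℕ} {E : Set (Fin r → ZMod 2)} (h0 : 0 ∉ E)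
    (hspan : span (ZMod 2) E = ⊤) (ρ : (Fin r → ZMod 2) → (Fin r → ℚ))
    (hρ : ∀ S ⊆ E, LinearIndepOn (ZMod 2) id S ↔ InjOn ρ S ∧ LinearIndepOn ℚ id (ρ '' S))
    (hTU : (Matrix.of fun i (w : E) => ρ w i).IsTotallyUnimodular) :
    RegularSpanning r E := by
  refine ⟨h0, hspan, ρ, hρ, fun g hgE hg => ?_⟩
  set N : Matrix (Fin r) (Fin r) ℚ := Matrix.of fun i j => ρ (g j) i
  obtain ⟨hinj, hli⟩ := (hρ (range g) (range_subset_iff.2 hgE)).1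
    ((linearIndepOn_id_range_iff hg.injective).2 hg)
  have hcols : LinearIndependent ℚ N.col := by
    rw [← range_comp] at hli
    exact (linearIndepOn_id_range_iff fun a b h =>
      hg.injective (hinj (mem_range_self a) (mem_range_self b) h)).1 hli
  have hdet : N.det ≠ 0 :=
    (Matrix.isUnit_iff_isUnit_det N).1 (Matrix.linearIndependent_cols_iff_isUnit.1 hcols) |>.ne_zero
  obtain ⟨s, hs⟩ := hTU r id (fun j => ⟨g j, hgE j⟩) Function.injective_id
    (fun j j' h => hg.injective (congrArg Subtype.val h))
  change (s : ℚ) = N.det at hs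
  rcases s with _ | _ | _ <;> simp_all [eq_comm]

section Basis

variable {ι K L M N : Type*} [DivisionRing K] [DivisionRing L] [AddCommGroup M] [Module K M]
  [AddCommGroup N] [Module L N]

theorem Module.Basis.linearIndepOn_insert_image_iff (b : Module.Basis ι K M) {T : Set ι} {v : M}
    (hv : v ∉ b '' T) :
    LinearIndepOn K id (insert v (b '' T)) ↔ ¬ ↑(b.repr v).support ⊆ T := by
  rw [linearIndepOn_id_insert hv, b.mem_span_image]
  exact and_iff_right (b.linearIndependent.linearIndepOn T).id_image

/-- Independence of a subset of `insert x (range b)` is decided by the support of `x` alone. -/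
theorem Module.Basis.linearIndepOn_image_iff (b : Module.Basis ι K M) (e : Module.Basis ι L N)
    {φ : M → N} (hφ : Function.Injective φ) (hφb : ∀ i, φ (b i) = e i) {x : M} (hx : x ∉ range b)
    (hφx : (e.repr (φ x)).support = (b.repr x).support) {S : Set M} (hS : S ⊆ insert x (range b)) :
    LinearIndepOn K id S ↔ LinearIndepOn L id (φ '' S) := by
  set T := b ⁻¹' S
  have hbT : φ '' (b '' T) = e '' T := by
    rw [image_image]
    exact image_congr fun i _ => hφb i
  by_cases hxS : x ∈ S
  · have hS' : S = insert x (b '' T) := by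
      rw [image_preimage_eq_inter_range]
      ext w
      constructor
      · intro hw
        rcases hS hw with rfl | hwb
        exacts [mem_insert _ _, mem_insert_of_mem _ ⟨hw, hwb⟩]
      · rintro (rfl | ⟨hw, -⟩)
        exacts [hxS, hw]
    have hxT : x ∉ b '' T := fun h => hx (image_subset_range _ _ h)
    have hφxT : φ x ∉ e '' T := by
      rintro ⟨i, -, hi⟩
      exact hx ⟨i, hφ ((hφb i).trans hi)⟩
    rw [hS', image_insert_eq, hbT, b.linearIndepOn_insert_image_iff hxT,
      e.linearIndepOn_insert_image_iff hφxT, hφx]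
  · have hS' : S = b '' T := by
      rw [image_preimage_eq_inter_range, eq_comm, inter_eq_left]
      intro w hw
      exact (hS hw).resolve_left fun h => hxS (h ▸ hw)
    rw [hS', hbT]
    exact iff_of_true (b.linearIndependent.linearIndepOn T).id_image
      (e.linearIndependent.linearIndepOn T).id_image

end Basis

noncomputable def Module.Basis.coordLift {ι M : Type*} [AddCommGroup M] [Module (ZMod 2) M]
    (b : Module.Basis ι (ZMod 2) M) (w : M) (i : ι) : ℚ :=
  (b.repr w i).val

section CoordLift

variable {ι M : Type*} [AddCommGroup M] [Module (ZMod 2) M] (b : Module.Basis ι (ZMod 2) M)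

theorem Module.Basis.coordLift_eq_zero_iff {w : M} {i : ι} :
    b.coordLift w i = 0 ↔ b.repr w i = 0 := by
  simp only [coordLift, Nat.cast_eq_zero, ZMod.val_eq_zero]

theorem Module.Basis.coordLift_mem_range_signType (w : M) (i : ι) :
    b.coordLift w i ∈ range SignType.cast := by
  unfold coordLift
  generalize b.repr w i = a
  fin_cases a
  exacts [⟨0, rfl⟩, ⟨1, rfl⟩]

theorem Module.Basis.coordLift_injective : Function.Injective b.coordLift := by
  intro w w' h
  refine b.repr.injective (Finsupp.ext fun i => ZMod.val_injective 2 ?_)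
  simpa only [coordLift, Nat.cast_inj] using congrFun h i

theorem Module.Basis.coordLift_self [DecidableEq ι] (k : ι) :
    b.coordLift (b k) = Pi.single k 1 := by
  ext i
  rcases eq_or_ne i k with rfl | hik
  · simp [coordLift, ZMod.val_one]
  · simp [coordLift, hik]

end CoordLift

/-- Under the coordinate lift, the vectors of `insert x (range b)` are columns of `[1 | x]`,
a totally unimodular matrix. -/
theorem regularSpanning_insert_range_basis {r : ℕ}
    (b : Module.Basis (Fin r) (ZMod 2) (Fin r → ZMod 2)) {x : Fin r → ZMod 2} (hx0 : x ≠ 0)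
    (hx : x ∉ range b) : RegularSpanning r (insert x (range b)) := by
  set e := Pi.basisFun ℚ (Fin r)
  have hρb : ∀ k, b.coordLift (b k) = e k := fun k => by
    rw [b.coordLift_self, Pi.basisFun_apply]
  refine regularSpanning_of_isTotallyUnimodular ?_ ?_ b.coordLift (fun S hS => ?_) ?_
  · rintro (h | ⟨i, hi⟩)
    exacts [hx0 h.symm, b.ne_zero i hi]
  · exact eq_top_iff.2 (b.span_eq ▸ span_mono (subset_insert _ _))
  · have hsupp : (e.repr (b.coordLift x)).support = (b.repr x).support := by
      ext i
      simp only [Finsupp.mem_support_iff, e, Pi.basisFun_repr, ne_eq, b.coordLift_eq_zero_iff]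
    rw [b.linearIndepOn_image_iff e b.coordLift_injective hρb hx hsupp hS]
    exact (and_iff_right b.coordLift_injective.injOn).symm
  · refine ((Matrix.isTotallyUnimodular_replicateCol (n := Unit)
      (b.coordLift_mem_range_signType x)).one_fromCols).of_range_transpose_subset ?_
    rintro - ⟨⟨w, hw⟩, rfl⟩
    rcases hw with rfl | ⟨k, rfl⟩
    · exact ⟨.inr (), by ext; simp⟩
    · exact ⟨.inl k, by ext i; simp [hρb, e, Matrix.one_apply, Pi.single_apply]⟩

theorem regularSpanning_insert_of_linearIndepOn {r : ℕ} {A : Set (Fin r → ZMod 2)}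
    (hA : LinearIndepOn (ZMod 2) id A) (hspan : span (ZMod 2) A = ⊤) {x : Fin r → ZMod 2}
    (hx0 : x ≠ 0) (hxA : x ∉ A) : RegularSpanning r (insert x A) := by
  let b₀ := Module.Basis.mk (v := ((↑) : A → Fin r → ZMod 2)) hA
    (by rw [Subtype.range_coe, hspan])
  let b := b₀.reindex (b₀.indexEquiv (Pi.basisFun (ZMod 2) (Fin r)))
  have hb : range b = A := by
    rw [b₀.range_reindex, Module.Basis.coe_mk hA]
    exact Subtype.range_coe
  rw [← hb] at hxA ⊢
  exact regularSpanning_insert_range_basis b hx0 hxA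

theorem RegularSpanning.mono {r : ℕ} {E E' : Set (Fin r → ZMod 2)} (hE : RegularSpanning r E)
    (hE' : E' ⊆ E) (hspan : span (ZMod 2) E' = ⊤) : RegularSpanning r E' := by
  obtain ⟨h0, -, ρ, hρ, hdet⟩ := hE
  exact ⟨fun h => h0 (hE' h), hspan, ρ, fun S hS => hρ S (hS.trans hE'),
    fun g hg => hdet g fun i => hE' (hg i)⟩

section LinearAlgebra

variable {K V : Type*} [DivisionRing K] [AddCommGroup V] [Module K V]

theorem exists_mem_sdiff_span_sdiff_singleton_eq {X A : Set V} (hX : LinearIndepOn K id X)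
    (hXA : X ⊆ A) (hA : ¬ LinearIndepOn K id A) :
    ∃ y ∈ A \ X, span K (A \ {y}) = span K A := by
  obtain ⟨C, hCA, hXC, hAC, hC⟩ := exists_linearIndepOn_id_extension hX hXA
  obtain ⟨y, hyA, hyC⟩ := not_subset.1 fun h : A ⊆ C => hA (hC.mono h)
  refine ⟨y, ⟨hyA, fun hyX => hyC (hXC hyX)⟩, le_antisymm (span_mono sdiff_subset) ?_⟩
  exact span_le.2 (hAC.trans (span_mono fun z hz => ⟨hCA hz, fun h => hyC (h ▸ hz)⟩))

theorem LinearIndepOn.exists_mem_notMem_span_of_not_subset {X A B : Set V}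
    (hA : LinearIndepOn K id A) (hXA : X ⊆ A) (hAX : ¬ A ⊆ X) (hB : span K B = span K A) :
    ∃ x ∈ B, x ∉ span K X := by
  obtain ⟨a, haA, haX⟩ := not_subset.1 hAX
  have hXa : X ⊆ A \ {a} := fun z hz => ⟨hXA hz, fun e => haX (e ▸ hz)⟩
  have ha : a ∉ span K X := fun h => hA.notMem_span haA (by simpa using span_mono hXa h)
  refine not_subset.1 fun hBX => ha ?_
  exact span_le.2 hBX (hB ▸ subset_span haA)

end LinearAlgebra

def IndepInterOrNested (K : Type*) {V : Type*} [DivisionRing K] [AddCommGroup V] [Module K V]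
    (A B : Set V) : Prop :=
  LinearIndepOn K id (A ∩ B) ∨ A ⊆ B ∨ B ⊆ A

theorem RegularSpanning.exists_step_of_linearIndepOn_inter {r : ℕ} {A B : Set (Fin r → ZMod 2)}
    (hA : RegularSpanning r A) (hB : span (ZMod 2) B = ⊤) (hAB : ¬ A ⊆ B)
    (hX : LinearIndepOn (ZMod 2) id (A ∩ B)) :
    (∃ y ∈ A \ B, RegularSpanning r (A \ {y}) ∧ LinearIndepOn (ZMod 2) id (A \ {y} ∩ B)) ∨
      ∃ x ∈ B \ A, RegularSpanning r (insert x A) ∧ LinearIndepOn (ZMod 2) id (insert x A ∩ B) := by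
  by_cases hAli : LinearIndepOn (ZMod 2) id A
  · obtain ⟨x, hxB, hxX⟩ := hAli.exists_mem_notMem_span_of_not_subset inter_subset_left
      (fun h => hAB (h.trans inter_subset_right)) (hB.trans hA.2.1.symm)
    have hxA : x ∉ A := fun h => hxX (subset_span ⟨h, hxB⟩)
    have hx0 : x ≠ 0 := fun h => hxX (h ▸ zero_mem _)
    refine .inr ⟨x, ⟨hxB, hxA⟩, regularSpanning_insert_of_linearIndepOn hAli hA.2.1 hx0 hxA, ?_⟩
    rw [insert_inter_of_mem hxB]
    exact hX.id_insert hxX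
  · obtain ⟨y, ⟨hyA, hyX⟩, hspan⟩ :=
      exists_mem_sdiff_span_sdiff_singleton_eq hX inter_subset_left hAli
    exact .inl ⟨y, ⟨hyA, fun hyB => hyX ⟨hyA, hyB⟩⟩, hA.mono sdiff_subset (hspan.trans hA.2.1),
      hX.mono (inter_subset_inter_left _ sdiff_subset)⟩

theorem RegularSpanning.exists_step {r : ℕ} {A B : Set (Fin r → ZMod 2)}
    (hB : RegularSpanning r B) (hA : RegularSpanning r A) (hAB : IndepInterOrNested (ZMod 2) A B)
    (hne : A ≠ B) :
    (∃ y ∈ A \ B, RegularSpanning r (A \ {y}) ∧ IndepInterOrNested (ZMod 2) (A \ {y}) B) ∨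
      ∃ x ∈ B \ A, RegularSpanning r (insert x A) ∧ IndepInterOrNested (ZMod 2) (insert x A) B := by
  by_cases hsub : A ⊆ B
  · obtain ⟨x, hxB, hxA⟩ := not_subset.1 fun h : B ⊆ A => hne (hsub.antisymm h)
    have hxAB : insert x A ⊆ B := insert_subset hxB hsub
    refine .inr ⟨x, ⟨hxB, hxA⟩, hB.mono hxAB ?_, .inr (.inl hxAB)⟩
    exact eq_top_iff.2 (hA.2.1 ▸ span_mono (subset_insert x A))
  by_cases hsup : B ⊆ A
  · obtain ⟨y, hyA, hyB⟩ := not_subset.1 hsub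
    have hByA : B ⊆ A \ {y} := fun z hz => ⟨hsup hz, fun h => hyB (h ▸ hz)⟩
    refine .inl ⟨y, ⟨hyA, hyB⟩, hA.mono sdiff_subset ?_, .inr (.inr hByA)⟩
    exact eq_top_iff.2 (hB.2.1 ▸ span_mono hByA)
  have hX : LinearIndepOn (ZMod 2) id (A ∩ B) := hAB.resolve_right (not_or.2 ⟨hsub, hsup⟩)
  exact (hA.exists_step_of_linearIndepOn_inter hB.2.1 hsub hX).imp
    (fun ⟨y, hy, hA', hX'⟩ => ⟨y, hy, hA', .inl hX'⟩)
    (fun ⟨x, hx, hA', hX'⟩ => ⟨x, hx, hA', .inl hX'⟩)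

open scoped symmDiff in
theorem exists_path_of_step {α : Type*} {P : Set α → Prop} {B : Set α}
    (hstep : ∀ A, P A → A ≠ B → (∃ y ∈ A \ B, P (A \ {y})) ∨ ∃ x ∈ B \ A, P (insert x A))
    {A : Set α} (hA : P A) (hfin : (A ∆ B).Finite) :
    ∃ γ : ℕ → Set α, γ 0 = A ∧ γ (A ∆ B).ncard = B ∧ (∀ i ≤ (A ∆ B).ncard, P (γ i)) ∧
      ∀ i < (A ∆ B).ncard, (γ i ∆ γ (i + 1)).ncard = 1 := by
  induction hn : (A ∆ B).ncard generalizing A with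
  | zero =>
    have hAB : A = B := symmDiff_eq_bot.1 ((ncard_eq_zero hfin).1 hn)
    exact ⟨fun _ => A, rfl, hAB, fun _ _ => hA, fun _ h => absurd h (Nat.not_lt_zero _)⟩
  | succ n ih =>
    have hne : A ≠ B := fun h => by simp [h] at hn
    obtain ⟨z, hz, hPz⟩ : ∃ z ∈ A ∆ B, P (A ∆ {z}) := by
      rcases hstep A hA hne with ⟨y, hy, hPy⟩ | ⟨x, hx, hPx⟩
      · exact ⟨y, .inl hy, by rwa [symmDiff_of_ge (singleton_subset_iff.2 hy.1)]⟩
      · refine ⟨x, .inr hx, ?_⟩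
        rw [(disjoint_singleton_right.2 hx.2).symmDiff_eq_sup]
        simpa using hPx
    have hdiff : A ∆ {z} ∆ B = (A ∆ B) \ {z} := by
      rw [symmDiff_right_comm, symmDiff_of_ge (singleton_subset_iff.2 hz)]
    obtain ⟨γ, h0, hlast, hP, hγ⟩ := ih hPz (hdiff ▸ hfin.sdiff) (by
      rw [hdiff, ncard_sdiff_singleton_of_mem hz, hn, Nat.add_sub_cancel])
    refine ⟨fun | 0 => A | i + 1 => γ i, rfl, hlast, ?_, ?_⟩
    · rintro (_ | i) hi
      exacts [hA, hP i (by omega)]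
    · rintro (_ | i) hi
      · simp [h0]
      · exact hγ i (by omega)

theorem exists_regular_geodesic_general (r : ℕ) (E₁ E₂ : Set (Fin r → ZMod 2))
    (h₁ : RegularSpanning r E₁) (h₂ : RegularSpanning r E₂)
    (hX : LinearIndependent (ZMod 2) ((↑) : ↥(E₁ ∩ E₂) → (Fin r → ZMod 2))) :
    ∃ γ : ℕ → Set (Fin r → ZMod 2),
      γ 0 = E₁ ∧ γ ((E₁ \ E₂).ncard + (E₂ \ E₁).ncard) = E₂ ∧
      (∀ i ≤ (E₁ \ E₂).ncard + (E₂ \ E₁).ncard, RegularSpanning r (γ i)) ∧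
      ∀ i < (E₁ \ E₂).ncard + (E₂ \ E₁).ncard,
        (symmDiff (γ i) (γ (i + 1))).ncard = 1 := by
  rw [← ncard_union_eq disjoint_sdiff_sdiff, ← Set.symmDiff_def]
  obtain ⟨γ, h0, hlast, hP, hγ⟩ :=
    exists_path_of_step (P := fun A => RegularSpanning r A ∧ IndepInterOrNested (ZMod 2) A E₂)
      (fun A hA hne => h₂.exists_step hA.1 hA.2 hne) ⟨h₁, .inl hX⟩ (toFinite _)
  exact ⟨γ, h0, hlast, fun i hi => (hP i hi).1, hγ⟩

/-- **Existence of regular geodesics**: if `E₁, E₂ ∈ IR(r, 𝔽₂)` and `E₁ ∩ E₂` is linearly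
independent over `𝔽₂`, then setting `d = |E₁ \ E₂| + |E₂ \ E₁|` there is a path
`γ₀ = E₁, γ₁, …, γ_d = E₂` through `IR(r, 𝔽₂)` in which consecutive sets have symmetric
difference of exactly one element. -/
theorem exists_regular_geodesic (r : ℕ) (hr : 1 ≤ r) (E₁ E₂ : Set (Fin r → ZMod 2))
    (h₁ : RegularSpanning r E₁) (h₂ : RegularSpanning r E₂)
    (hX : LinearIndependent (ZMod 2) ((↑) : ↥(E₁ ∩ E₂) → (Fin r → ZMod 2))) :
    ∃ γ : ℕ → Set (Fin r → ZMod 2),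
      γ 0 = E₁ ∧ γ ((E₁ \ E₂).ncard + (E₂ \ E₁).ncard) = E₂ ∧
      (∀ i ≤ (E₁ \ E₂).ncard + (E₂ \ E₁).ncard, RegularSpanning r (γ i)) ∧
      ∀ i < (E₁ \ E₂).ncard + (E₂ \ E₁).ncard,
        (symmDiff (γ i) (γ (i + 1))).ncard = 1 :=
  exists_regular_geodesic_general r E₁ E₂ h₁ h₂ hX
end

section
/- Let r ≥ 1 and let Ẽ be a subset of ℤ^r (i.e., of Fin r → ℤ) such that 0 ∉ Ẽ, Ẽ = −Ẽ, Ẽ generates ℤ^r as an abelian group, and every r-element ℚ-linearly independent subset of Ẽ generates ℤ^r. If e₁, e₂ ∈ Ẽ are congruent modulo 2 (i.e., e₁ − e₂ ∈ 2ℤ^r), then e₂ = e₁ or e₂ = −e₁. Consequently reduction modulo 2 maps Ẽ two-to-one onto its image in (ZMod 2)^r. -/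
/-- The conditions defining elements of `IR(r, ℤ)`: a subset `Ẽ` of `ℤ^r` with `0 ∉ Ẽ`,
`Ẽ = -Ẽ`, generating `ℤ^r` as an abelian group, and such that every `r`-element
`ℚ`-linearly independent subset of `Ẽ` generates `ℤ^r`. -/
def Unimodular (r : ℕ) (E : Set (Fin r → ℤ)) : Prop :=
  0 ∉ E ∧ E = -E ∧ AddSubgroup.closure E = ⊤ ∧
    ∀ S ⊆ E, S.ncard = r →
      LinearIndependent ℚ (fun s : S => fun i => ((s : Fin r → ℤ) i : ℚ)) →
      AddSubgroup.closure S = ⊤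

/-!
Every `ℚ`-independent subset of `Ẽ` extends inside `Ẽ` to a `ℚ`-basis of `ℚ^r`, which by
unimodularity is a `ℤ`-basis of `ℤ^r`. If `e₁, e₂` are independent, the coordinate functional `f`
of such a basis at `e₁` has `f e₁ = 1` and `f e₂ = 0`, so `e₁ - e₂ ∉ 2ℤ^r`. If they are dependent,
both are primitive (`f e₁ = 1 = g e₂` for some functionals), and dependent primitive vectors
differ by a unit of `ℤ`.
-/

open Module Submodule Set

section

variable {R M : Type*} [CommRing R] [AddCommGroup M] [Module R M]

theorem isUnit_of_smul_eq_sub {f : M →ₗ[R] R} {x y w : M} {n : R} (hx : f x = 1) (hy : f y = 0)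
    (h : x - y = n • w) : IsUnit n :=
  IsUnit.of_mul_eq_one (f w) <| by rw [← smul_eq_mul, ← map_smul, ← h, map_sub, hx, hy, sub_zero]

theorem exists_isUnit_smul_eq_of_smul_add_smul_eq_zero [IsDomain R] [IsTorsionFree R M]
    {f g : M →ₗ[R] R} {x y : M} (hx : f x = 1) (hy : g y = 1) {a b : R}
    (hab : a • x + b • y = 0) (hne : a ≠ 0 ∨ b ≠ 0) : ∃ c : R, IsUnit c ∧ y = c • x := by
  have hf : a + b * f y = 0 := by simpa [hx] using congrArg f hab
  have hg : a * g x + b = 0 := by simpa [hy] using congrArg g hab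
  have hb : b ≠ 0 := by rintro rfl; simp_all
  refine ⟨f y, IsUnit.of_mul_eq_one (g x) ?_, ?_⟩
  · apply mul_left_cancel₀ hb
    linear_combination (g x) * hf - hg
  · have : b • (y - f y • x) = 0 := by
      rw [smul_sub, smul_smul, show b * f y = -a by linear_combination hf, neg_smul,
        sub_neg_eq_add, add_comm, hab]
    exact sub_eq_zero.1 ((smul_eq_zero.1 this).resolve_left hb)

theorem exists_coord_of_linearIndepOn_of_span_eq_top {S : Set M} (hS : LinearIndepOn R id S)
    (hspan : span R S = ⊤) {x : M} (hx : x ∈ S) :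
    ∃ f : M →ₗ[R] R, f x = 1 ∧ ∀ y ∈ S, y ≠ x → f y = 0 := by
  classical
  let B := Basis.mk hS (by simpa using hspan.ge)
  have hB : ∀ y (hy : y ∈ S), B.repr y = Finsupp.single ⟨y, hy⟩ 1 := fun y hy => by
    simpa [B] using B.repr_self ⟨y, hy⟩
  refine ⟨B.coord ⟨x, hx⟩, by simp [hB x hx], fun y hy hyx => ?_⟩
  simp [hB y hy, Subtype.ext_iff, hyx]

end

theorem span_int_eq_top_iff {M : Type*} [AddCommGroup M] {S : Set M} :
    span ℤ S = ⊤ ↔ AddSubgroup.closure S = ⊤ := by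
  rw [← span_int_eq_addSubgroupClosure, toAddSubgroup_eq_top]

theorem ncard_eq_of_linearIndepOn_of_span_eq_top {K V : Type*} [DivisionRing K] [AddCommGroup V]
    [Module K V] [FiniteDimensional K V] {b : Set V} (hb : LinearIndepOn K id b)
    (hspan : span K b = ⊤) : b.ncard = finrank K V := by
  rw [← Nat.card_coe_set_eq, finrank_eq_nat_card_basis (Basis.mk hb (by simpa using hspan.ge))]

def castToRat (ι : Type*) : (ι → ℤ) →ₗ[ℤ] ι → ℚ := (Algebra.linearMap ℤ ℚ).compLeft ι

namespace castToRat

variable {ι : Type*}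

theorem injective : Function.Injective (castToRat ι) :=
  fun _ _ h => funext fun i => Int.cast_injective (congrFun h i)

theorem linearIndepOn_iff {S : Set (ι → ℤ)} :
    LinearIndepOn ℚ (castToRat ι) S ↔ LinearIndepOn ℤ id S := by
  rw [LinearIndepOn, ← LinearIndependent.iff_fractionRing ℤ ℚ]
  exact (castToRat ι).linearIndependent_iff_of_injOn injective.injOn

theorem span_image_eq_top [Finite ι] {S : Set (ι → ℤ)} (hS : span ℤ S = ⊤) :
    span ℚ (castToRat ι '' S) = ⊤ := by
  classical
  have hrange :
      LinearMap.range (castToRat ι) ≤ (span ℚ (castToRat ι '' S)).restrictScalars ℤ := by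
    rw [LinearMap.range_eq_map, ← hS, map_span]
    exact span_le_restrictScalars ℤ ℚ _
  rw [eq_top_iff, ← (Pi.basisFun ℚ ι).span_eq, span_le]
  rintro _ ⟨i, rfl⟩
  exact hrange ⟨Pi.single i 1, by ext j; simp [castToRat, Pi.single_apply]⟩

end castToRat

namespace Unimodular

variable {r : ℕ} {E : Set (Fin r → ℤ)}

theorem exists_basis_superset (hE : Unimodular r E) {T : Set (Fin r → ℤ)} (hTE : T ⊆ E)
    (hT : LinearIndepOn ℤ id T) :
    ∃ S, T ⊆ S ∧ S ⊆ E ∧ LinearIndepOn ℤ id S ∧ span ℤ S = ⊤ := by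
  set φ := castToRat (Fin r)
  obtain ⟨b, hbE, hTb, hEb, hb⟩ := exists_linearIndepOn_id_extension
    (castToRat.linearIndepOn_iff.2 hT).id_image (image_mono hTE)
  have hbspan : span ℚ b = ⊤ := by
    rw [eq_top_iff, ← castToRat.span_image_eq_top (span_int_eq_top_iff.2 hE.2.2.1)]
    exact span_le.2 hEb
  set S := E ∩ φ ⁻¹' b
  have hφS : φ '' S = b := by rw [image_inter_preimage, inter_eq_right.2 hbE]
  have hSindep : LinearIndepOn ℚ φ S :=
    (linearIndepOn_iff_image castToRat.injective.injOn).2 (hφS ▸ hb)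
  have hScard : S.ncard = r := by
    rw [← ncard_image_of_injective S castToRat.injective, hφS,
      ncard_eq_of_linearIndepOn_of_span_eq_top hb hbspan, finrank_fin_fun]
  refine ⟨S, fun t ht => ⟨hTE ht, hTb ⟨t, ht, rfl⟩⟩, inter_subset_left,
    castToRat.linearIndepOn_iff.1 hSindep, ?_⟩
  -- `LinearIndepOn ℚ (castToRat _) S` unfolds to the independence hypothesis of `Unimodular`.
  exact span_int_eq_top_iff.2 (hE.2.2.2 S inter_subset_left hScard hSindep)

theorem exists_coord (hE : Unimodular r E) {T : Set (Fin r → ℤ)} (hTE : T ⊆ E)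
    (hT : LinearIndepOn ℤ id T) {x : Fin r → ℤ} (hx : x ∈ T) :
    ∃ f : (Fin r → ℤ) →ₗ[ℤ] ℤ, f x = 1 ∧ ∀ y ∈ T, y ≠ x → f y = 0 := by
  obtain ⟨S, hTS, -, hS, hspan⟩ := hE.exists_basis_superset hTE hT
  obtain ⟨f, hfx, hf⟩ := exists_coord_of_linearIndepOn_of_span_eq_top hS hspan (hTS hx)
  exact ⟨f, hfx, fun y hy => hf y (hTS hy)⟩

theorem ne_zero (hE : Unimodular r E) {x : Fin r → ℤ} (hx : x ∈ E) : x ≠ 0 :=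
  fun h => hE.1 (h ▸ hx)

theorem neg_mem (hE : Unimodular r E) {x : Fin r → ℤ} (hx : x ∈ E) : -x ∈ E := by
  rw [hE.2.1]
  simpa using hx

theorem exists_coord_eq_one (hE : Unimodular r E) {x : Fin r → ℤ} (hx : x ∈ E) :
    ∃ f : (Fin r → ℤ) →ₗ[ℤ] ℤ, f x = 1 := by
  obtain ⟨f, hf, -⟩ := hE.exists_coord (singleton_subset_iff.2 hx)
    ((linearIndepOn_singleton_iff ℤ).2 (hE.ne_zero hx)) rfl
  exact ⟨f, hf⟩

theorem eq_or_eq_neg_of_two_dvd_sub (hE : Unimodular r E) {x y : Fin r → ℤ} (hx : x ∈ E)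
    (hy : y ∈ E) (hxy : ∀ i, (2 : ℤ) ∣ x i - y i) : y = x ∨ y = -x := by
  by_cases heq : x = y
  · exact Or.inl heq.symm
  by_cases hind : LinearIndepOn ℤ id {x, y}
  · obtain ⟨f, hfx, hfy⟩ := hE.exists_coord (pair_subset hx hy) hind (mem_insert x _)
    choose w hw using hxy
    have h2 := isUnit_of_smul_eq_sub hfx (hfy y (by simp) (Ne.symm heq))
      (show x - y = (2 : ℤ) • w from funext fun i => by simp [hw i])
    exact absurd (Int.isUnit_iff.1 h2) (by omega)
  · simp only [LinearIndepOn.pair_iff _ heq, id, not_forall] at hind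
    obtain ⟨a, b, hab, hne⟩ := hind
    obtain ⟨f, hf⟩ := hE.exists_coord_eq_one hx
    obtain ⟨g, hg⟩ := hE.exists_coord_eq_one hy
    obtain ⟨c, hc, rfl⟩ :=
      exists_isUnit_smul_eq_of_smul_add_smul_eq_zero hf hg hab (not_and_or.1 hne)
    rcases Int.isUnit_iff.1 hc with rfl | rfl <;> simp

theorem setOf_mod_two_eq (hE : Unimodular r E) {e : Fin r → ℤ} (he : e ∈ E) :
    {x ∈ E | (fun i => ((x i : ℤ) : ZMod 2)) = fun i => ((e i : ℤ) : ZMod 2)} = {e, -e} := by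
  ext x
  rw [mem_insert_iff, mem_singleton_iff]
  constructor
  · rintro ⟨hx, hmod⟩
    refine hE.eq_or_eq_neg_of_two_dvd_sub he hx fun i => ?_
    simpa [ZMod.intCast_eq_intCast_iff_dvd_sub] using congrFun hmod i
  · rintro (rfl | rfl)
    · exact ⟨he, rfl⟩
    · exact ⟨hE.neg_mem he, funext fun i => by simp [ZMod.neg_eq_self_mod_two]⟩

end Unimodular

theorem unimodular_two_to_one_mod_two_general (r : ℕ) (E : Set (Fin r → ℤ))
    (hE : Unimodular r E) :
    (∀ e₁ ∈ E, ∀ e₂ ∈ E, (∀ i, (2 : ℤ) ∣ (e₁ i - e₂ i)) → e₂ = e₁ ∨ e₂ = -e₁) ∧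
    ∀ e ∈ E,
      {x ∈ E | (fun i => ((x i : ℤ) : ZMod 2)) = fun i => ((e i : ℤ) : ZMod 2)}.encard
        = 2 := by
  refine ⟨fun e₁ h₁ e₂ h₂ => hE.eq_or_eq_neg_of_two_dvd_sub h₁ h₂, fun e he => ?_⟩
  rw [hE.setOf_mod_two_eq he, encard_pair]
  exact fun h => hE.ne_zero he (self_eq_neg.1 h)

/-- If `Ẽ ⊆ ℤ^r` satisfies the conditions of `IR(r, ℤ)`, then any two elements of `Ẽ`
congruent modulo `2` are equal or opposite; consequently reduction modulo `2` maps `Ẽ`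
two-to-one onto its image in `(ZMod 2)^r`. -/
theorem unimodular_two_to_one_mod_two (r : ℕ) (hr : 1 ≤ r) (E : Set (Fin r → ℤ))
    (hE : Unimodular r E) :
    (∀ e₁ ∈ E, ∀ e₂ ∈ E, (∀ i, (2 : ℤ) ∣ (e₁ i - e₂ i)) → e₂ = e₁ ∨ e₂ = -e₁) ∧
    ∀ e ∈ E,
      {x ∈ E | (fun i => ((x i : ℤ) : ZMod 2)) = fun i => ((e i : ℤ) : ZMod 2)}.encard
        = 2 :=
  unimodular_two_to_one_mod_two_general r E hE
end

section
/- Let Ẽ be a subset of ℤ² such that 0 ∉ Ẽ, Ẽ = −Ẽ, Ẽ generates ℤ² as an abelian group, and every 2-element ℚ-linearly independent subset of Ẽ generates ℤ². Then exactly one of the following holds: (a) there exists a ℤ-basis (a, b) of ℤ² with Ẽ = {a, −a, b, −b} (so |Ẽ| = 4); or (b) there exists a ℤ-basis (a, b) of ℤ² with Ẽ = {a, −a, b, −b, a + b, −(a + b)} (so |Ẽ| = 6). -/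
/-!
With `cross x y = x₁y₂ - x₂y₁`, a pair `{x, y}` generates `ℤ²` only if `cross x y = ±1`, and it is
`ℚ`-independent iff `cross x y ≠ 0`; so the hypothesis gives `|cross x y| ≤ 1` on `E`. Since `E`
generates, it contains `a, b` with `cross a b = ±1`, and Cramer's rule
`cross a b • e = cross e b • a + cross a e • b` puts every `e ∈ E` in `{±a, ±b, ±(a + b), ±(a - b)}`.
As `cross (a + b) (a - b) = -2 cross a b`, at most one of `a + b`, `a - b` lies in `E`; replacing `b`
by `-b` we may take it to be `a + b`. The two alternatives have 4 and 6 elements.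
-/

lemma eq_or_eq_of_subset_of_sub_notMem {G : Type*} [AddCommGroup G] {E : Set G} {a b : G}
    (hsym : ∀ x ∈ E, -x ∈ E) (ha : a ∈ E) (hb : b ∈ E)
    (hsub : E ⊆ {a, -a, b, -b, a + b, -(a + b), a - b, -(a - b)}) (hab : a - b ∉ E) :
    E = {a, -a, b, -b} ∨ E = {a, -a, b, -b, a + b, -(a + b)} := by
  have hab' : -(a - b) ∉ E := fun h => hab (by simpa using hsym _ h)
  by_cases hp : a + b ∈ E
  · right
    refine subset_antisymm (fun x hx => ?_) ?_
    · have := hsub hx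
      simp only [Set.mem_insert_iff, Set.mem_singleton_iff] at this ⊢
      rcases this with h | h | h | h | h | h | h | h <;> simp_all
    · simp only [Set.insert_subset_iff, Set.singleton_subset_iff]
      exact ⟨ha, hsym a ha, hb, hsym b hb, hp, hsym _ hp⟩
  · left
    have hp' : -(a + b) ∉ E := fun h => hp (by simpa using hsym _ h)
    refine subset_antisymm (fun x hx => ?_) ?_
    · have := hsub hx
      simp only [Set.mem_insert_iff, Set.mem_singleton_iff] at this ⊢
      rcases this with h | h | h | h | h | h | h | h <;> simp_all
    · simp only [Set.insert_subset_iff, Set.singleton_subset_iff]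
      exact ⟨ha, hsym a ha, hb, hsym b hb⟩

namespace Prod

variable {R : Type*} [CommRing R]

def cross (x y : R × R) : R := x.1 * y.2 - x.2 * y.1

@[simp] lemma cross_self (x : R × R) : cross x x = 0 := by
  rw [cross, mul_comm, sub_self]

lemma cross_neg_right (x y : R × R) : cross x (-y) = -cross x y := by
  simp only [cross, Prod.fst_neg, Prod.snd_neg]; ring

lemma cross_add_sub (x y : R × R) : cross (x + y) (x - y) = -2 * cross x y := by
  simp only [cross, Prod.fst_add, Prod.snd_add, Prod.fst_sub, Prod.snd_sub]; ring

lemma cross_smul_add_smul_left (s t : R) (x y z : R × R) :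
    cross (s • x + t • y) z = s * cross x z + t * cross y z := by
  simp only [cross, Prod.fst_add, Prod.snd_add, Prod.smul_fst, Prod.smul_snd, smul_eq_mul]; ring

lemma cross_smul_add_smul_right (s t : R) (x y z : R × R) :
    cross z (s • x + t • y) = s * cross z x + t * cross z y := by
  simp only [cross, Prod.fst_add, Prod.snd_add, Prod.smul_fst, Prod.smul_snd, smul_eq_mul]; ring

lemma cross_smul_eq (x y z : R × R) : cross x y • z = cross z y • x + cross x z • y := by
  ext <;> simp only [cross, Prod.fst_add, Prod.snd_add, Prod.smul_fst, Prod.smul_snd,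
    smul_eq_mul] <;> ring

lemma map_cross {S : Type*} [CommRing S] (f : R →+* S) (x y : R × R) :
    cross (Prod.map f f x) (Prod.map f f y) = f (cross x y) := by
  simp [cross]

lemma isUnit_cross_of_span_eq_top {x y : R × R} (h : Submodule.span R {x, y} = ⊤) :
    IsUnit (cross x y) := by
  obtain ⟨m, n, hmn⟩ := Submodule.mem_span_pair.mp (h ▸ Submodule.mem_top : ((1, 0) : R × R) ∈ _)
  obtain ⟨p, q, hpq⟩ := Submodule.mem_span_pair.mp (h ▸ Submodule.mem_top : ((0, 1) : R × R) ∈ _)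
  refine IsUnit.of_mul_eq_one (m * q - n * p) ?_
  calc cross x y * (m * q - n * p) = cross (m • x + n • y) (p • x + q • y) := by
        rw [cross_smul_add_smul_left, cross_smul_add_smul_right, cross_smul_add_smul_right,
          cross_self, cross_self]
        simp only [cross]
        ring
    _ = 1 := by simp [hmn, hpq, cross]

lemma exists_cross_ne_zero_of_span_eq_top [Nontrivial R] {E : Set (R × R)}
    (hE : Submodule.span R E = ⊤) (h0 : (0 : R × R) ∉ E) :
    ∃ a ∈ E, ∃ b ∈ E, cross a b ≠ 0 := by
  obtain ⟨a, ha⟩ : E.Nonempty := by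
    rw [Set.nonempty_iff_ne_empty]; rintro rfl; simp at hE
  refine ⟨a, ha, ?_⟩
  by_contra! h
  have hker : ∀ z ∈ Submodule.span R E, cross a z = 0 := fun z hz => by
    induction hz using Submodule.span_induction with
    | mem z hz => exact h z hz
    | zero => simp [cross]
    | add z w _ _ hz hw => simpa [hz, hw] using cross_smul_add_smul_right 1 1 z w a
    | smul c z _ hz => simpa [hz] using cross_smul_add_smul_right c 0 z 0 a
  have ha0 : a = 0 := Prod.ext
    (by simpa [cross] using hker (0, 1) (hE ▸ Submodule.mem_top))
    (by simpa [cross] using hker (1, 0) (hE ▸ Submodule.mem_top))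
  exact h0 (ha0 ▸ ha)

section IsDomain

variable [IsDomain R]

lemma smul_add_smul_injective {x y : R × R} (h : cross x y ≠ 0) :
    Function.Injective fun c : R × R => c.1 • x + c.2 • y := by
  intro c d hcd
  have h1 := congrArg (cross · y) hcd
  have h2 := congrArg (cross x ·) hcd
  simp only [cross_smul_add_smul_left, cross_smul_add_smul_right, cross_self, mul_zero,
    add_zero, zero_add] at h1 h2
  exact Prod.ext (mul_right_cancel₀ h h1) (mul_right_cancel₀ h h2)

lemma linearIndepOn_pair_of_cross_ne_zero {ι : Type*} (f : ι → R × R) {i j : ι}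
    (h : cross (f i) (f j) ≠ 0) : LinearIndepOn R f {i, j} := by
  have hij : i ≠ j := by rintro rfl; simp at h
  refine (LinearIndepOn.pair_iff f hij).2 fun c d hcd => ?_
  simpa using smul_add_smul_injective h (a₁ := (c, d)) (a₂ := 0) (by simpa using hcd)

end IsDomain

lemma exists_cross_ne_zero_sub_notMem {E : Set (ℤ × ℤ)} (h0 : (0 : ℤ × ℤ) ∉ E)
    (hsym : ∀ x ∈ E, -x ∈ E) (hE : Submodule.span ℤ E = ⊤)
    (hcross : ∀ x ∈ E, ∀ y ∈ E, |cross x y| ≤ 1) :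
    ∃ a ∈ E, ∃ b ∈ E, cross a b ≠ 0 ∧ a - b ∉ E := by
  obtain ⟨a, ha, b, hb, hab⟩ := exists_cross_ne_zero_of_span_eq_top hE h0
  have hsum : a + b ∉ E ∨ a - b ∉ E := by
    by_contra! h
    have h2 := hcross _ h.1 _ h.2
    rw [cross_add_sub, abs_mul] at h2
    have h1 := Int.one_le_abs hab
    norm_num at h2
    omega
  rcases hsum with h | h
  · exact ⟨a, ha, -b, hsym b hb, by rwa [cross_neg_right, neg_ne_zero], by rwa [sub_neg_eq_add]⟩
  · exact ⟨a, ha, b, hb, hab, h⟩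

lemma mem_of_abs_cross_le_one {a b e : ℤ × ℤ} (hab : IsUnit (cross a b))
    (heb : |cross e b| ≤ 1) (hae : |cross a e| ≤ 1) (he : e ≠ 0) :
    e ∈ ({a, -a, b, -b, a + b, -(a + b), a - b, -(a - b)} : Set (ℤ × ℤ)) := by
  have hcramer : e = (cross a b * cross e b) • a + (cross a b * cross a e) • b := by
    rw [mul_smul, mul_smul, ← smul_add, ← cross_smul_eq, smul_smul, Int.isUnit_mul_self hab,
      one_smul]
  have habs : |cross a b| = 1 := Int.isUnit_iff_abs_eq.1 hab
  obtain ⟨u, hu, v, hv, rfl⟩ : ∃ u : ℤ, |u| ≤ 1 ∧ ∃ v : ℤ, |v| ≤ 1 ∧ e = u • a + v • b :=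
    ⟨_, by rwa [abs_mul, habs, one_mul], _, by rwa [abs_mul, habs, one_mul], hcramer⟩
  rcases Int.abs_le_one_iff.1 hu with rfl | rfl | rfl <;>
    rcases Int.abs_le_one_iff.1 hv with rfl | rfl | rfl <;>
    simp [sub_eq_add_neg, add_comm] at he ⊢

lemma ncard_signed_pair {a b : ℤ × ℤ} (h : cross a b ≠ 0) :
    ({a, -a, b, -b} : Set (ℤ × ℤ)).ncard = 4 := by
  have := Set.ncard_image_of_injective ({(1, 0), (-1, 0), (0, 1), (0, -1)} : Set (ℤ × ℤ))
    (smul_add_smul_injective h)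
  simpa [Set.image_insert_eq] using this

lemma ncard_signed_triple {a b : ℤ × ℤ} (h : cross a b ≠ 0) :
    ({a, -a, b, -b, a + b, -(a + b)} : Set (ℤ × ℤ)).ncard = 6 := by
  have := Set.ncard_image_of_injective
    ({(1, 0), (-1, 0), (0, 1), (0, -1), (1, 1), (-1, -1)} : Set (ℤ × ℤ))
    (smul_add_smul_injective h)
  simpa [Set.image_insert_eq, add_comm] using this

end Prod

/-- If `Ẽ ⊆ ℤ²` satisfies `0 ∉ Ẽ`, `Ẽ = -Ẽ`, `Ẽ` generates `ℤ²` as an abelian group, and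
every 2-element `ℚ`-linearly independent subset of `Ẽ` generates `ℤ²`, then exactly one of
the following holds: (a) `Ẽ = {a, -a, b, -b}` for a `ℤ`-basis `(a, b)` of `ℤ²`, or
(b) `Ẽ = {a, -a, b, -b, a + b, -(a + b)}` for a `ℤ`-basis `(a, b)` of `ℤ²` (where a
`ℤ`-basis means a pair with determinant `a₁b₂ - a₂b₁ = ±1`). -/
theorem unimodular_rank_two_classification (E : Set (ℤ × ℤ))
    (h0 : (0 : ℤ × ℤ) ∉ E) (hneg : E = -E) (hgen : AddSubgroup.closure E = ⊤)
    (hbasis : ∀ S ⊆ E, S.ncard = 2 →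
      LinearIndependent ℚ
        (fun s : S => ((((s : ℤ × ℤ).1 : ℚ), ((s : ℤ × ℤ).2 : ℚ)) : ℚ × ℚ)) →
      AddSubgroup.closure S = ⊤) :
    Xor'
      (∃ a b : ℤ × ℤ, (a.1 * b.2 - a.2 * b.1 = 1 ∨ a.1 * b.2 - a.2 * b.1 = -1) ∧
        E = {a, -a, b, -b})
      (∃ a b : ℤ × ℤ, (a.1 * b.2 - a.2 * b.1 = 1 ∨ a.1 * b.2 - a.2 * b.1 = -1) ∧
        E = {a, -a, b, -b, a + b, -(a + b)}) := by
  have hsym : ∀ x ∈ E, -x ∈ E := fun x hx => by rw [hneg]; simpa using hx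
  have hspan : Submodule.span ℤ E = ⊤ := by
    rw [← AddSubgroup.toIntSubmodule_closure, hgen]; rfl
  have hcross : ∀ x ∈ E, ∀ y ∈ E, |x.cross y| ≤ 1 := by
    intro x hx y hy
    by_cases h : x.cross y = 0
    · simp [h]
    have hxy : x ≠ y := by rintro rfl; simp at h
    have hli := Prod.linearIndepOn_pair_of_cross_ne_zero
      (Prod.map (Int.castRingHom ℚ) (Int.castRingHom ℚ)) (i := x) (j := y)
      (by rwa [Prod.map_cross, map_ne_zero_iff _ Int.cast_injective])
    refine (Int.isUnit_iff_abs_eq.1 (Prod.isUnit_cross_of_span_eq_top ?_)).le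
    rw [← AddSubgroup.toIntSubmodule_closure,
      hbasis {x, y} (Set.insert_subset hx (Set.singleton_subset_iff.2 hy)) (Set.ncard_pair hxy) hli]
    rfl
  obtain ⟨a, ha, b, hb, hab, hsub⟩ := Prod.exists_cross_ne_zero_sub_notMem h0 hsym hspan hcross
  have hunit : IsUnit (a.cross b) :=
    Int.isUnit_iff_abs_eq.2 (le_antisymm (hcross a ha b hb) (Int.one_le_abs hab))
  have hE := eq_or_eq_of_subset_of_sub_notMem hsym ha hb
    (fun e he => Prod.mem_of_abs_cross_le_one hunit (hcross e he b hb) (hcross a ha e he)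
      (ne_of_mem_of_not_mem he h0)) hsub
  refine (xor_iff_or_and_not_and _ _).2
    ⟨hE.imp (⟨a, b, Int.isUnit_iff.1 hunit, ·⟩) (⟨a, b, Int.isUnit_iff.1 hunit, ·⟩), ?_⟩
  rintro ⟨⟨a, b, hab, rfl⟩, ⟨c, d, hcd, hE⟩⟩
  have := congrArg Set.ncard hE
  rw [Prod.ncard_signed_pair (Int.isUnit_iff.2 hab).ne_zero,
    Prod.ncard_signed_triple (Int.isUnit_iff.2 hcd).ne_zero] at this
  norm_num at this
end

section
/- Let a, b, c ∈ ℤ² be nonzero vectors with a + b + c = 0 and |a₁b₂ − a₂b₁| = 1 (so a, b, c are the side vectors of a lattice triangle of area 1/2), and suppose the triangle has no obtuse interior angle, i.e., a·b ≤ 0, b·c ≤ 0 and c·a ≤ 0, where x·y = x₁y₁ + x₂y₂. Then two of the three vectors a, b, c have squared Euclidean norm 1 and the third has squared Euclidean norm 2; i.e., the triangle is a right triangle with sides of length 1, 1, √2. -/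
set_option maxHeartbeats 1000000


/-- If `a, b, c` are nonzero vectors in `ℤ²` with `a + b + c = 0` forming a lattice
triangle of area `1/2` (`|a₁b₂ - a₂b₁| = 1`) with no obtuse interior angle
(`a·b ≤ 0`, `b·c ≤ 0`, `c·a ≤ 0`), then two of the three vectors have squared norm `1`
and the third has squared norm `2`: the triangle is a right triangle with sides
`1, 1, √2`. -/
theorem lattice_triangle_no_obtuse (a b c : ℤ × ℤ)
    (ha : a ≠ 0) (hb : b ≠ 0) (hc : c ≠ 0) (hsum : a + b + c = 0)
    (hdet : |a.1 * b.2 - a.2 * b.1| = 1)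
    (hab : a.1 * b.1 + a.2 * b.2 ≤ 0)
    (hbc : b.1 * c.1 + b.2 * c.2 ≤ 0)
    (hca : c.1 * a.1 + c.2 * a.2 ≤ 0) :
    (a.1 ^ 2 + a.2 ^ 2 = 1 ∧ b.1 ^ 2 + b.2 ^ 2 = 1 ∧ c.1 ^ 2 + c.2 ^ 2 = 2) ∨
    (a.1 ^ 2 + a.2 ^ 2 = 1 ∧ c.1 ^ 2 + c.2 ^ 2 = 1 ∧ b.1 ^ 2 + b.2 ^ 2 = 2) ∨
    (b.1 ^ 2 + b.2 ^ 2 = 1 ∧ c.1 ^ 2 + c.2 ^ 2 = 1 ∧ a.1 ^ 2 + a.2 ^ 2 = 2) := by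
  obtain ⟨a1, a2⟩ := a
  obtain ⟨b1, b2⟩ := b
  obtain ⟨c1, c2⟩ := c
  simp only [ne_eq, Prod.mk_eq_zero, not_and_or] at ha hb hc
  simp only [Prod.mk_add_mk, Prod.mk_eq_zero] at hsum
  obtain ⟨h1, h2⟩ := hsum
  dsimp only at *
  have hc1 : c1 = -(a1 + b1) := by linarith
  have hc2 : c2 = -(a2 + b2) := by linarith
  subst hc1 hc2
  have hd2 : (a1 * b2 - a2 * b1) ^ 2 = 1 := by
    rw [← sq_abs, hdet]; norm_num
  set A := a1 ^ 2 + a2 ^ 2 with hAdef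
  set B := b1 ^ 2 + b2 ^ 2 with hBdef
  set C := (-(a1 + b1)) ^ 2 + (-(a2 + b2)) ^ 2 with hCdef
  have hA1 : 1 ≤ A := by
    rcases ha with h | h <;>
      nlinarith [sq_nonneg a1, sq_nonneg a2, sq_pos_of_ne_zero h]
  have hB1 : 1 ≤ B := by
    rcases hb with h | h <;>
      nlinarith [sq_nonneg b1, sq_nonneg b2, sq_pos_of_ne_zero h]
  have hC1 : 1 ≤ C := by
    rcases hc with h | h <;>
      nlinarith [sq_nonneg (a1 + b1), sq_nonneg (a2 + b2), sq_pos_of_ne_zero h]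
  have heron : 2 * (A * B + B * C + C * A) - (A * A + B * B + C * C) = 4 := by
    rw [hAdef, hBdef, hCdef]; linear_combination 4 * hd2
  have t1 : C ≤ A + B := by rw [hAdef, hBdef, hCdef]; nlinarith [hab]
  have t2 : A ≤ B + C := by rw [hAdef, hBdef, hCdef]; nlinarith [hbc]
  have t3 : B ≤ C + A := by rw [hAdef, hBdef, hCdef]; nlinarith [hca]
  clear_value A B C
  clear hdet hd2 hab hbc hca ha hb hc h1 h2 hAdef hBdef hCdef
  have hA2 : A ≤ 2 := by
    nlinarith [mul_nonneg (by linarith : (0:ℤ) ≤ C - 1) (by linarith : (0:ℤ) ≤ A + B - C),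
      mul_nonneg (by linarith : (0:ℤ) ≤ B - 1) (by linarith : (0:ℤ) ≤ C + A - B),
      mul_nonneg (by linarith : (0:ℤ) ≤ B + C - A) (by linarith : (0:ℤ) ≤ C + A - B),
      mul_nonneg (by linarith : (0:ℤ) ≤ B + C - A) (by linarith : (0:ℤ) ≤ A + B - C)]
  have hB2 : B ≤ 2 := by
    nlinarith [mul_nonneg (by linarith : (0:ℤ) ≤ C - 1) (by linarith : (0:ℤ) ≤ A + B - C),
      mul_nonneg (by linarith : (0:ℤ) ≤ A - 1) (by linarith : (0:ℤ) ≤ B + C - A),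
      mul_nonneg (by linarith : (0:ℤ) ≤ B + C - A) (by linarith : (0:ℤ) ≤ C + A - B),
      mul_nonneg (by linarith : (0:ℤ) ≤ C + A - B) (by linarith : (0:ℤ) ≤ A + B - C)]
  have hC2 : C ≤ 2 := by
    nlinarith [mul_nonneg (by linarith : (0:ℤ) ≤ B - 1) (by linarith : (0:ℤ) ≤ C + A - B),
      mul_nonneg (by linarith : (0:ℤ) ≤ A - 1) (by linarith : (0:ℤ) ≤ B + C - A),
      mul_nonneg (by linarith : (0:ℤ) ≤ B + C - A) (by linarith : (0:ℤ) ≤ A + B - C),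
      mul_nonneg (by linarith : (0:ℤ) ≤ C + A - B) (by linarith : (0:ℤ) ≤ A + B - C)]
  interval_cases A <;> interval_cases B <;> interval_cases C <;> omega
end
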